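/- Let B_1, B_2, B_3 be independent {0,1}-valued random variables with P(B_i = 1) = p_i and 1/3 ≤ p_1 + p_2 + p_3 ≤ 5/3. Then P(B_1 + B_2 + B_3 = 1) ≥ 64/243. -/

import Mathlib

/-!
Write `s`, `q`, `r` for the elementary symmetric polynomials of the success probabilities;
then `P(B₁ + B₂ + B₃ = 1) = s - 2q + 3r`. Schur's inequality gives `9r ≥ 4sq - s³`.
If `s ≤ 3/2`, this together with `3q ≤ s²` bounds the probability below by its value
`s (1 - s/3)²` at equal probabilities `s/3`, which is at least `64/243` once `s ≥ 1/3`.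
If `s ≥ 3/2`, averaging Schur's bound with `r ≥ 0` (weights `3/(2s)` and `1 - 3/(2s)`)
eliminates `q` and gives the bound `s - s²/2 ≥ 5/18` for `s ≤ 5/3`.
-/

open MeasureTheory ProbabilityTheory
open scoped ENNReal

theorem schur_inequality {a b c : ℝ} (ha : 0 ≤ a) (hb : 0 ≤ b) (hc : 0 ≤ c) :
    0 ≤ a * (a - b) * (a - c) + b * (b - a) * (b - c) + c * (c - a) * (c - b) := by
  nlinarith [mul_nonneg ha (sq_nonneg (a - b)), mul_nonneg hb (sq_nonneg (b - c)),
    mul_nonneg hc (sq_nonneg (c - a)), mul_nonneg ha (sq_nonneg (a - c)),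
    mul_nonneg hb (sq_nonneg (b - a)), mul_nonneg hc (sq_nonneg (c - b)),
    mul_nonneg (mul_nonneg ha hb) hc]

def probExactlyOne (a b c : ℝ) : ℝ :=
  a * (1 - b) * (1 - c) + (1 - a) * b * (1 - c) + (1 - a) * (1 - b) * c

section probExactlyOne

variable {a b c : ℝ}

theorem mul_one_sub_div_three_sq_le_probExactlyOne (ha : 0 ≤ a) (hb : 0 ≤ b) (hc : 0 ≤ c)
    (hs : a + b + c ≤ 3 / 2) :
    (a + b + c) * (1 - (a + b + c) / 3) ^ 2 ≤ probExactlyOne a b c := by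
  have hq : 3 * (a * b + b * c + c * a) ≤ (a + b + c) ^ 2 := by
    nlinarith [sq_nonneg (a - b), sq_nonneg (b - c), sq_nonneg (c - a)]
  unfold probExactlyOne
  nlinarith [schur_inequality ha hb hc,
    mul_nonneg (by linarith : (0 : ℝ) ≤ 3 / 2 - (a + b + c)) (sub_nonneg.2 hq)]

theorem sub_sq_div_two_le_probExactlyOne (ha : 0 ≤ a) (hb : 0 ≤ b) (hc : 0 ≤ c)
    (hs : 3 / 2 ≤ a + b + c) :
    (a + b + c) - (a + b + c) ^ 2 / 2 ≤ probExactlyOne a b c := by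
  have hscaled : 0 ≤ 2 * (a + b + c) *
      (probExactlyOne a b c - ((a + b + c) - (a + b + c) ^ 2 / 2)) := by
    unfold probExactlyOne
    nlinarith [schur_inequality ha hb hc,
      mul_nonneg (by linarith : (0 : ℝ) ≤ 6 * (a + b + c) - 9)
        (mul_nonneg (mul_nonneg ha hb) hc)]
  exact sub_nonneg.1 ((mul_nonneg_iff_of_pos_left (by linarith)).1 hscaled)

theorem sixtyFour_div_243_le_probExactlyOne (ha : 0 ≤ a) (hb : 0 ≤ b) (hc : 0 ≤ c)
    (hlb : 1 / 3 ≤ a + b + c) (hub : a + b + c ≤ 5 / 3) :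
    64 / 243 ≤ probExactlyOne a b c := by
  rcases le_total (a + b + c) (3 / 2) with hs | hs
  · refine le_trans ?_ (mul_one_sub_div_three_sq_le_probExactlyOne ha hb hc hs)
    -- `s (1 - s/3)² - 64/243 = (s - 1/3) ((3/2 - s) (25/6 - s) + 31/36) / 9`
    nlinarith [mul_nonneg (sub_nonneg.2 hlb)
      (mul_nonneg (sub_nonneg.2 hs) (by linarith : (0 : ℝ) ≤ 25 / 6 - (a + b + c)))]
  · refine le_trans ?_ (sub_sq_div_two_le_probExactlyOne ha hb hc hs)
    nlinarith

end probExactlyOne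

theorem Fintype.sum_eq_one_iff_eq_single {ι : Type*} [Fintype ι] [DecidableEq ι]
    (f : ι → ℕ) :
    ∑ i, f i = 1 ↔ ∃ k, f = Pi.single k 1 := by
  simpa [Finsupp.sum_fintype, Equiv.symm_apply_eq] using
    Finsupp.sum_eq_one_iff (Finsupp.equivFunOnFinite.symm f)

section Bernoulli

variable {Ω ι : Type*} [MeasurableSpace Ω] {P : Measure Ω} [Fintype ι] [DecidableEq ι]
  {B : ι → Ω → ℕ}

theorem measure_sum_eq_one_eq_sum_prod (hmeas : ∀ i, Measurable (B i)) (hindep : iIndepFun B P) :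
    P {ω | ∑ i, B i ω = 1} =
      ∑ k, ∏ i, P {ω | B i ω = (Pi.single k 1 : ι → ℕ) i} := by
  have hunion :
      {ω | ∑ i, B i ω = 1} = ⋃ k, ⋂ i, B i ⁻¹' {(Pi.single k 1 : ι → ℕ) i} := by
    ext ω
    simp [Fintype.sum_eq_one_iff_eq_single, funext_iff]
  have hdisj : Pairwise (Function.onFun Disjoint
      fun k : ι => ⋂ i, B i ⁻¹' {(Pi.single k 1 : ι → ℕ) i}) := by
    intro k l hkl
    refine Set.disjoint_left.2 fun ω hk hl => ?_
    simp only [Set.mem_iInter, Set.mem_preimage, Set.mem_singleton_iff] at hk hl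
    simpa [hkl] using (hk k).symm.trans (hl k)
  rw [hunion, measure_iUnion hdisj fun k => .iInter fun i => hmeas i (measurableSet_singleton _),
    tsum_fintype]
  exact Finset.sum_congr rfl fun k _ =>
    hindep.meas_iInter fun i =>
      ⟨{(Pi.single k 1 : ι → ℕ) i}, measurableSet_singleton _, rfl⟩

variable [IsProbabilityMeasure P]

theorem measure_eq_zero_eq_one_sub {X : Ω → ℕ} (hX : Measurable X)
    (h01 : ∀ ω, X ω = 0 ∨ X ω = 1) :
    P {ω | X ω = 0} = 1 - P {ω | X ω = 1} := by
  have hcompl : {ω | X ω = 0} = {ω | X ω = 1}ᶜ := by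
    ext ω
    have := h01 ω
    simp only [Set.mem_ofPred_eq, Set.mem_compl_iff]
    omega
  rw [hcompl, prob_compl_eq_one_sub (measurableSet_eq_fun hX measurable_const)]

theorem measure_sum_eq_one_of_bernoulli (hmeas : ∀ i, Measurable (B i))
    (h01 : ∀ i ω, B i ω = 0 ∨ B i ω = 1) (hindep : iIndepFun B P) :
    P {ω | ∑ i, B i ω = 1} =
      ∑ k, ∏ i, if i = k then P {ω | B i ω = 1} else 1 - P {ω | B i ω = 1} := by
  rw [measure_sum_eq_one_eq_sum_prod hmeas hindep]
  refine Finset.sum_congr rfl fun k _ => Finset.prod_congr rfl fun i _ => ?_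
  rcases eq_or_ne i k with rfl | hik
  · simp
  · simp [hik, measure_eq_zero_eq_one_sub (hmeas i) (h01 i)]

end Bernoulli

theorem ENNReal.toReal_sum_prod_ite_one_sub {ι : Type*} [Fintype ι] [DecidableEq ι]
    {p : ι → ℝ≥0∞} (hp : ∀ i, p i ≤ 1) :
    (∑ k, ∏ i, if i = k then p i else 1 - p i).toReal =
      ∑ k, ∏ i, if i = k then (p i).toReal else 1 - (p i).toReal := by
  have hfin : ∀ i, p i ≠ ∞ := fun i => ne_top_of_le_ne_top ENNReal.one_ne_top (hp i)
  rw [ENNReal.toReal_sum fun k _ => ENNReal.prod_ne_top fun i _ => by split_ifs <;> simp [hfin]]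
  simp [ENNReal.toReal_prod, apply_ite ENNReal.toReal,
    ENNReal.toReal_sub_of_le (hp _) ENNReal.one_ne_top]

/-- If `B₁, B₂, B₃` are independent `{0,1}`-valued random variables
with success probabilities summing to a value in `[1/3, 5/3]`, then
`P(B₁ + B₂ + B₃ = 1) ≥ 64/243`. -/
theorem stmt15 {Ω : Type*} [MeasurableSpace Ω] (P : Measure Ω) [IsProbabilityMeasure P]
    (B : Fin 3 → Ω → ℕ) (hmeas : ∀ i, Measurable (B i))
    (h01 : ∀ i ω, B i ω = 0 ∨ B i ω = 1)
    (hindep : iIndepFun B P)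
    (p : Fin 3 → ℝ≥0∞) (hp : ∀ i, P {ω | B i ω = 1} = p i)
    (hsum_lb : 1 / 3 ≤ p 0 + p 1 + p 2) (hsum_ub : p 0 + p 1 + p 2 ≤ 5 / 3) :
    64 / 243 ≤ P {ω | B 0 ω + B 1 ω + B 2 ω = 1} := by
  have hle : ∀ i, p i ≤ 1 := fun i => hp i ▸ prob_le_one
  have hfin : ∀ i, p i ≠ ∞ := fun i => ne_top_of_le_ne_top ENNReal.one_ne_top (hle i)
  have hsum_toReal : (p 0 + p 1 + p 2).toReal = (p 0).toReal + (p 1).toReal + (p 2).toReal := by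
    simp [ENNReal.toReal_add, hfin]
  have hlb := ENNReal.toReal_mono (by simp [hfin]) hsum_lb
  have hub := ENNReal.toReal_mono (by finiteness) hsum_ub
  rw [hsum_toReal] at hlb hub
  have hevent : {ω | B 0 ω + B 1 ω + B 2 ω = 1} = {ω | ∑ i, B i ω = 1} := by
    simp [Fin.sum_univ_three]
  rw [← ENNReal.toReal_le_toReal (by finiteness) (measure_ne_top _ _), hevent,
    measure_sum_eq_one_of_bernoulli hmeas h01 hindep]
  simp only [hp]
  rw [ENNReal.toReal_sum_prod_ite_one_sub hle]
  simp only [ENNReal.toReal_div, ENNReal.toReal_ofNat, ENNReal.toReal_one] at hlb hub ⊢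
  simp only [Fin.sum_univ_three, Fin.prod_univ_three, Fin.reduceEq, ↓reduceIte]
  exact sixtyFour_div_243_le_probExactlyOne ENNReal.toReal_nonneg ENNReal.toReal_nonneg ENNReal.toReal_nonneg hlb hub
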